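/- An ε-locking scheme for min-entropy sources: under the hypotheses of the previous locking theorem, if instead the message X has min-entropy at least ℓ with 2^{ℓ−n} > ε, then for any measurement with outcome I and any outcome i, Δ(p_{X|I=i}, p_X) ≤ 2ε/(2^{ℓ−n} − ε). -/

import Mathlib

open Matrix
open scoped BigOperators ComplexOrder

/-- The locking encoding `E(x,k) = (1/d_B) Σ_b U_k† (|x⟩⟨x| ⊗ |b⟩⟨b|) U_k`. -/
noncomputable def lockEnc (dA dB t : ℕ)
    (U : Fin t → Matrix (Fin dA × Fin dB) (Fin dA × Fin dB) ℂ)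
    (x : Fin dA) (k : Fin t) : Matrix (Fin dA × Fin dB) (Fin dA × Fin dB) ℂ :=
  (((dB : ℝ)⁻¹ : ℝ) : ℂ) •
    ∑ b : Fin dB, (U k)ᴴ * Matrix.single (x, b) (x, b) (1 : ℂ) * U k

/-- The joint probability `P(I = i, X = x)` of the message `x` (distributed as `pX`)
and outcome `i` of the rank-one POVM `{ξ_i |e_i⟩⟨e_i|}` applied to `E(X, K)`, with the
key `K` uniform on `[t]` and independent of `X`. -/
noncomputable def lockProbSrc (dA dB t m : ℕ)
    (U : Fin t → Matrix (Fin dA × Fin dB) (Fin dA × Fin dB) ℂ) (pX : Fin dA → ℝ)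
    (ξ : Fin m → ℝ) (e : Fin m → EuclideanSpace ℂ (Fin dA × Fin dB))
    (i : Fin m) (x : Fin dA) : ℝ :=
  pX x * ((1 / (t : ℝ)) * ∑ k,
    ((((ξ i : ℝ) : ℂ) • Matrix.vecMulVec (e i) (fun p => (starRingEnd ℂ) (e i p)) *
        lockEnc dA dB t U x k).trace).re)

/-! Conditioned on the outcome `i`, the law of `X` is `p_X` reweighted by the key-averaged
distribution `f` of the `A` register of `U_k e_i`, which the metric uncertainty relation makes
`ε`-close to uniform. Only the mass of `f` below `2^{-n}` can lower the normaliser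
`α = Σ p_X f`, and `p_X ≤ 2^{-ℓ}` caps that loss at `2^{-ℓ} ε`, so `α ≥ 2^{-ℓ}(2^{ℓ-n} - ε)`;
then `Δ(p_X f / α, p_X) = Σ p_X |f - α| / 2α ≤ 2^{-ℓ} · 2ε / α`. Min-entropy is used directly as
the pointwise bound `p_X ≤ 2^{-ℓ}`, with no decomposition into flat sources. -/

namespace Locking

open Finset

section Reweighting

variable {ι : Type*} [Fintype ι]

theorem sum_posPart_sub_eq_half_sum_abs {f g : ι → ℝ} (hfg : ∑ x, f x = ∑ x, g x) :
    ∑ x, (g x - f x)⁺ = (1 / 2) * ∑ x, |f x - g x| := by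
  have h : ∀ x, (g x - f x)⁺ = (|f x - g x| + (g x - f x)) / 2 := fun x => by
    rw [abs_sub_comm]
    linarith [posPart_add_negPart (g x - f x), posPart_sub_negPart (g x - f x)]
  simp only [h, ← sum_div, sum_add_distrib, sum_sub_distrib, hfg]
  ring

variable {p f : ι → ℝ} {u c ε : ℝ}

theorem sub_sum_mul_le (hp0 : ∀ x, 0 ≤ p x) (hp1 : ∑ x, p x = 1) (hpc : ∀ x, p x ≤ c)
    (hfu : ∑ x, f x = ∑ _x : ι, u) :
    u - ∑ x, p x * f x ≤ c * ((1 / 2) * ∑ x, |f x - u|) := by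
  calc u - ∑ x, p x * f x = ∑ x, p x * (u - f x) := by
        simp only [mul_sub, sum_sub_distrib, ← sum_mul, hp1, one_mul]
    _ ≤ ∑ x, c * (u - f x)⁺ := sum_le_sum fun x _ =>
        (mul_le_mul_of_nonneg_left (le_posPart _) (hp0 x)).trans
          (mul_le_mul_of_nonneg_right (hpc x) (posPart_nonneg _))
    _ = c * ((1 / 2) * ∑ x, |f x - u|) := by
        rw [← mul_sum, sum_posPart_sub_eq_half_sum_abs hfu]

theorem abs_sum_mul_sub_le (hp0 : ∀ x, 0 ≤ p x) (hp1 : ∑ x, p x = 1) :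
    |∑ x, p x * f x - u| ≤ ∑ x, p x * |f x - u| := by
  calc |∑ x, p x * f x - u| = |∑ x, p x * (f x - u)| := by
        simp only [mul_sub, sum_sub_distrib, ← sum_mul, hp1, one_mul]
    _ ≤ ∑ x, |p x * (f x - u)| := abs_sum_le_sum_abs _ _
    _ = ∑ x, p x * |f x - u| := by simp only [abs_mul, abs_of_nonneg (hp0 _)]

theorem half_sum_abs_mul_div_sub_eq (hp0 : ∀ x, 0 ≤ p x) {α : ℝ} (hα : 0 < α) :
    (1 / 2) * ∑ x, |p x * f x / α - p x| = (∑ x, p x * |f x - α|) / (2 * α) := by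
  rw [mul_sum, sum_div]
  refine sum_congr rfl fun x _ => ?_
  rw [show p x * f x / α - p x = p x * (f x - α) / α by field_simp, abs_div, abs_mul,
    abs_of_nonneg (hp0 x), abs_of_pos hα]
  ring

theorem half_sum_abs_reweight_sub_le (hp0 : ∀ x, 0 ≤ p x) (hp1 : ∑ x, p x = 1)
    (hpc : ∀ x, p x ≤ c) (hc : 0 ≤ c) (hfu : ∑ x, f x = ∑ _x : ι, u)
    (hf : (1 / 2) * ∑ x, |f x - u| ≤ ε) (hcε : c * ε < u) :
    (1 / 2) * ∑ x, |p x * f x / (∑ y, p y * f y) - p x| ≤ 2 * c * ε / (u - c * ε) := by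
  set α := ∑ y, p y * f y
  have hα : u - c * ε ≤ α := by
    linarith [sub_sum_mul_le hp0 hp1 hpc hfu, mul_le_mul_of_nonneg_left hf hc]
  have hdevU : ∑ x, p x * |f x - u| ≤ 2 * c * ε := by
    calc ∑ x, p x * |f x - u| ≤ ∑ x, c * |f x - u| :=
          sum_le_sum fun x _ => mul_le_mul_of_nonneg_right (hpc x) (abs_nonneg _)
      _ ≤ 2 * c * ε := by rw [← mul_sum]; nlinarith
  have hdevα : ∑ x, p x * |f x - α| ≤ 2 * ∑ x, p x * |f x - u| := by
    calc ∑ x, p x * |f x - α| ≤ ∑ x, (p x * |f x - u| + p x * |u - α|) :=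
          sum_le_sum fun x _ => by
            rw [← mul_add]
            exact mul_le_mul_of_nonneg_left (abs_sub_le _ _ _) (hp0 x)
      _ = ∑ x, p x * |f x - u| + |α - u| := by
          rw [sum_add_distrib, ← sum_mul, hp1, one_mul, abs_sub_comm]
      _ ≤ 2 * ∑ x, p x * |f x - u| := by
          linarith [abs_sum_mul_sub_le (f := f) (u := u) hp0 hp1]
  have hdevU_nonneg : 0 ≤ ∑ x, p x * |f x - u| :=
    sum_nonneg fun x _ => mul_nonneg (hp0 x) (abs_nonneg _)
  rw [half_sum_abs_mul_div_sub_eq hp0 (by linarith)]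
  calc (∑ x, p x * |f x - α|) / (2 * α) ≤ (2 * (2 * c * ε)) / (2 * (u - c * ε)) :=
        div_le_div₀ (by linarith) (by linarith) (by linarith) (by linarith)
    _ = 2 * c * ε / (u - c * ε) := mul_div_mul_left _ _ two_ne_zero

end Reweighting

section Quantum

variable {n 𝕜 : Type*} [Fintype n] [DecidableEq n] [RCLike 𝕜]

theorem sum_norm_sq_mulVec_of_mem_unitaryGroup {U : Matrix n n 𝕜}
    (hU : U ∈ Matrix.unitaryGroup n 𝕜) (ψ : EuclideanSpace 𝕜 n) :
    ∑ p, ‖(U *ᵥ ψ) p‖ ^ 2 = ‖ψ‖ ^ 2 := by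
  have hU' := Unitary.map_mem (toEuclideanCLM (n := n) (𝕜 := 𝕜)) hU
  rw [← ContinuousLinearMap.norm_map_of_mem_unitary hU' ψ, EuclideanSpace.norm_sq_eq,
    ofLp_toEuclideanCLM]

theorem trace_vecMulVec_star_mul_conjTranspose_single_mul (U : Matrix n n 𝕜) (v : n → 𝕜)
    (q : n) :
    (vecMulVec v (fun p => starRingEnd 𝕜 (v p)) * (Uᴴ * single q q 1 * U)).trace
      = (‖(U *ᵥ v) q‖ : 𝕜) ^ 2 := by
  calc _ = (U * vecMulVec v (star v) * Uᴴ * single q q 1).trace := by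
        rw [trace_mul_comm, Matrix.mul_assoc, trace_mul_comm, ← Matrix.mul_assoc]
        rfl
    _ = (U *ᵥ v) q * starRingEnd 𝕜 ((U *ᵥ v) q) := by
        rw [trace_mul_single, mul_vecMulVec, vecMulVec_mul, ← star_mulVec]
        simp [vecMulVec_apply]
    _ = _ := RCLike.mul_conj _

end Quantum

section Marginal

variable {ι κ : Type*} [Fintype ι] [Fintype κ] {t : ℕ}

/-- The key average of the distribution `p^A_{U_k ψ}` of the `A` register of `U_k ψ` measured in
the computational basis. -/
noncomputable def avgMarginalA (U : Fin t → Matrix (ι × κ) (ι × κ) ℂ)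
    (ψ : EuclideanSpace ℂ (ι × κ)) (a : ι) : ℝ :=
  (1 / (t : ℝ)) * ∑ k, ∑ b, ‖(U k *ᵥ ψ) (a, b)‖ ^ 2

theorem abs_mean_sub_le (ht : 0 < t) (g : Fin t → ℝ) (u : ℝ) :
    |(1 / (t : ℝ)) * ∑ k, g k - u| ≤ (1 / (t : ℝ)) * ∑ k, |g k - u| := by
  have hmean : (1 / (t : ℝ)) * ∑ k, g k - u = (1 / (t : ℝ)) * ∑ k, (g k - u) := by
    rw [sum_sub_distrib, sum_const, card_univ, Fintype.card_fin, nsmul_eq_mul]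
    field_simp
  rw [hmean, abs_mul, abs_of_nonneg (by positivity)]
  exact mul_le_mul_of_nonneg_left (abs_sum_le_sum_abs _ _) (by positivity)

theorem half_sum_abs_avgMarginalA_sub_le (ht : 0 < t) (U : Fin t → Matrix (ι × κ) (ι × κ) ℂ)
    (ψ : EuclideanSpace ℂ (ι × κ)) (u : ℝ) :
    (1 / 2) * ∑ a, |avgMarginalA U ψ a - u|
      ≤ (1 / (t : ℝ)) * ∑ k, (1 / 2) * ∑ a, |(∑ b, ‖(U k *ᵥ ψ) (a, b)‖ ^ 2) - u| := by
  calc (1 / 2) * ∑ a, |avgMarginalA U ψ a - u|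
      ≤ (1 / 2) * ∑ a, (1 / (t : ℝ)) * ∑ k, |(∑ b, ‖(U k *ᵥ ψ) (a, b)‖ ^ 2) - u| := by
        gcongr with a
        exact abs_mean_sub_le ht _ u
    _ = _ := by
        simp only [mul_sum]
        rw [sum_comm]
        exact sum_congr rfl fun k _ => sum_congr rfl fun a _ => by ring

variable [DecidableEq ι] [DecidableEq κ]

theorem sum_avgMarginalA (ht : 0 < t) {U : Fin t → Matrix (ι × κ) (ι × κ) ℂ}
    (hU : ∀ k, U k ∈ Matrix.unitaryGroup (ι × κ) ℂ) {ψ : EuclideanSpace ℂ (ι × κ)}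
    (hψ : ‖ψ‖ = 1) :
    ∑ a, avgMarginalA U ψ a = 1 := by
  have hk : ∀ k, ∑ a, ∑ b, ‖(U k *ᵥ ψ) (a, b)‖ ^ 2 = 1 := fun k => by
    rw [← Fintype.sum_prod_type', sum_norm_sq_mulVec_of_mem_unitaryGroup (hU k), hψ, one_pow]
  simp only [avgMarginalA, ← mul_sum]
  rw [sum_comm]
  simp [hk, ht.ne']

end Marginal

theorem trace_smul_vecMulVec_mul_lockEnc {dA dB t : ℕ}
    (U : Fin t → Matrix (Fin dA × Fin dB) (Fin dA × Fin dB) ℂ) (ξ : ℝ)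
    (ψ : EuclideanSpace ℂ (Fin dA × Fin dB)) (x : Fin dA) (k : Fin t) :
    (((ξ : ℂ) • vecMulVec ψ (fun p => starRingEnd ℂ (ψ p))) * lockEnc dA dB t U x k).trace
      = ((ξ / dB * ∑ b, ‖(U k *ᵥ ψ) (x, b)‖ ^ 2 : ℝ) : ℂ) := by
  simp only [lockEnc, Matrix.smul_mul, Matrix.mul_smul, mul_sum, trace_smul, trace_sum,
    trace_vecMulVec_star_mul_conjTranspose_single_mul, RCLike.ofReal_eq_complex_ofReal]
  push_cast
  simp only [smul_eq_mul, mul_sum]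
  exact sum_congr rfl fun b _ => by ring

theorem lockProbSrc_eq {dA dB t m : ℕ}
    (U : Fin t → Matrix (Fin dA × Fin dB) (Fin dA × Fin dB) ℂ) (pX : Fin dA → ℝ)
    (ξ : Fin m → ℝ) (e : Fin m → EuclideanSpace ℂ (Fin dA × Fin dB)) (i : Fin m) (x : Fin dA) :
    lockProbSrc dA dB t m U pX ξ e i x = ξ i / dB * (pX x * avgMarginalA U (e i) x) := by
  simp only [lockProbSrc, avgMarginalA, trace_smul_vecMulVec_mul_lockEnc, Complex.ofReal_re,
    ← mul_sum]
  ring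

end Locking

theorem stmt15 (n dA dB t : ℕ) (hdA : dA = 2 ^ n) (hB : 0 < dB) (ht : 0 < t)
    (ε : ℝ)
    (U : Fin t → Matrix (Fin dA × Fin dB) (Fin dA × Fin dB) ℂ)
    (hU : ∀ k, U k ∈ Matrix.unitaryGroup (Fin dA × Fin dB) ℂ)
    (hMUR : ∀ ψ : EuclideanSpace ℂ (Fin dA × Fin dB), ‖ψ‖ = 1 →
      (1 / (t : ℝ)) * ∑ k, (1 / 2) * ∑ a : Fin dA,
          |(∑ b : Fin dB, ‖(U k).mulVec ψ (a, b)‖ ^ 2) - 1 / (dA : ℝ)| ≤ ε)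
    (ℓ : ℝ) (hℓε : ε < (2 : ℝ) ^ (ℓ - n))
    (pX : Fin dA → ℝ) (hpX0 : ∀ x, 0 ≤ pX x) (hpX1 : ∑ x, pX x = 1)
    (hmin : ∀ x, pX x ≤ (2 : ℝ) ^ (-ℓ)) :
    ∀ (m : ℕ) (ξ : Fin m → ℝ) (e : Fin m → EuclideanSpace ℂ (Fin dA × Fin dB)),
      (∀ i, 0 < ξ i) → (∀ i, ‖e i‖ = 1) →
      (∑ i, ((ξ i : ℝ) : ℂ) •
          Matrix.vecMulVec (e i) (fun p => (starRingEnd ℂ) (e i p)) = 1) →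
      ∀ i : Fin m, 0 < ∑ x, lockProbSrc dA dB t m U pX ξ e i x →
        (1 / 2) * ∑ x : Fin dA,
            |lockProbSrc dA dB t m U pX ξ e i x /
                (∑ x', lockProbSrc dA dB t m U pX ξ e i x') - pX x|
          ≤ 2 * ε / ((2 : ℝ) ^ (ℓ - n) - ε) := by
  intro m ξ e hξ he _ i _
  set f := Locking.avgMarginalA U (e i)
  have hcond : ∀ x,
      lockProbSrc dA dB t m U pX ξ e i x / ∑ x', lockProbSrc dA dB t m U pX ξ e i x'
        = pX x * f x / ∑ x', pX x' * f x' := fun x => by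
    simp only [Locking.lockProbSrc_eq, ← Finset.mul_sum]
    exact mul_div_mul_left _ _ (div_pos (hξ i) (Nat.cast_pos.mpr hB)).ne'
  have hf_sum : ∑ a, f a = ∑ _a : Fin dA, 1 / (dA : ℝ) := by
    rw [Locking.sum_avgMarginalA ht hU (he i)]
    simp [hdA]
  have hf : (1 / 2) * ∑ a, |f a - 1 / (dA : ℝ)| ≤ ε :=
    (Locking.half_sum_abs_avgMarginalA_sub_le ht U (e i) _).trans (hMUR (e i) (he i))
  have hc : 0 < (2 : ℝ) ^ (-ℓ) := by positivity
  have hu : 1 / (dA : ℝ) = (2 : ℝ) ^ (-ℓ) * (2 : ℝ) ^ (ℓ - n) := by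
    rw [← Real.rpow_add two_pos, show -ℓ + (ℓ - n) = -(n : ℝ) by ring, Real.rpow_neg two_pos.le,
      Real.rpow_natCast, hdA, Nat.cast_pow, Nat.cast_ofNat, one_div]
  simp only [hcond]
  calc _ ≤ 2 * (2 : ℝ) ^ (-ℓ) * ε / (1 / (dA : ℝ) - (2 : ℝ) ^ (-ℓ) * ε) :=
        Locking.half_sum_abs_reweight_sub_le hpX0 hpX1 hmin hc.le hf_sum hf
          (by rw [hu]; gcongr)
    _ = 2 * ε / ((2 : ℝ) ^ (ℓ - n) - ε) := by
        rw [hu, ← mul_sub, mul_comm 2, mul_assoc, mul_div_mul_left _ _ hc.ne']
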